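/- arXiv:math/0409013 — 2 statements merged into one kernel-verified Lean document; each statement's English description precedes it below -/
import Mathlib

section
/- The ₃F₂ transformation identity: for a nonnegative integer n, ₃F₂(−n, a, b; d, e; 1) = ((d−a)_n (e−a)_n / ((d)_n (e)_n)) · ₃F₂(−n, a, a+b−n−d−e+1; a−n−d+1, a−n−e+1; 1), whenever both sides are defined (no vanishing Pochhammer symbols in the denominators). -/
open Finset

/-- The Pochhammer symbol `(a)_n = a(a+1)⋯(a+n-1)` for a real argument. -/
noncomputable def poch (a : ℝ) (n : ℕ) : ℝ := ∏ i ∈ Finset.range n, (a + i)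

/-- The terminating hypergeometric sum `₃F₂(-n, a, b; d, e; 1)`. -/
noncomputable def F32 (n : ℕ) (a b d e : ℝ) : ℝ :=
  ∑ j ∈ Finset.range (n + 1),
    poch (-(n : ℝ)) j * poch a j * poch b j /
      (poch d j * poch e j * (Nat.factorial j : ℝ))

/-!
Multiplying `₃F₂(-n, a, b; d, e; 1)` by `(d)_n (e)_n` gives a polynomial `F32Numerator`, and the
identity becomes a polynomial identity. Split `b = c + v` with `c = a + b - n - d - e + 1`, the
new numerator parameter, and expand `(b)_j` by Vandermonde's convolution. After exchanging the
two summations, the inner sums are balanced terminating `₃F₂` numerators, evaluated by the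
Pfaff–Saalschütz theorem; the factors `(-1)^(n-k) (d - a)_(n-k)` it produces are reflected
Pochhammer symbols `(a - n - d + 1 + k)_(n-k)`, which reassemble the right-hand side.
Pfaff–Saalschütz itself is proved the same way, from Vandermonde's convolution and its
alternating form (Chu–Vandermonde).
-/

open Polynomial

theorem poch_eq_eval_ascPochhammer (a : ℝ) (n : ℕ) : poch a n = (ascPochhammer ℝ n).eval a := by
  induction n with
  | zero => simp [poch]
  | succ n ih => rw [poch, prod_range_succ, ← poch, ih, ascPochhammer_succ_eval]

theorem poch_add (a : ℝ) (m k : ℕ) : poch a (m + k) = poch a m * poch (a + m) k := by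
  simp [poch, prod_range_add, add_assoc]

theorem poch_eq_mul_poch {i n : ℕ} (h : i ≤ n) (a : ℝ) :
    poch a n = poch a i * poch (a + i) (n - i) := by
  rw [← poch_add, Nat.add_sub_cancel' h]

theorem poch_neg_sub_add_one (a : ℝ) (n : ℕ) : poch (-a - n + 1) n = (-1) ^ n * poch a n := by
  have h := ascPochhammer_eval_neg_eq_descPochhammer ℝ (-a) n
  rw [neg_neg] at h
  rw [poch_eq_eval_ascPochhammer, poch_eq_eval_ascPochhammer,
    ← descPochhammer_eval_eq_ascPochhammer, h, ← mul_assoc, ← mul_pow]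
  norm_num

theorem poch_neg_natCast (n j : ℕ) : poch (-n) j = (-1) ^ j * n.choose j * j.factorial := by
  rw [poch_eq_eval_ascPochhammer, ascPochhammer_eval_neg_eq_descPochhammer,
    descPochhammer_eval_eq_descFactorial, Nat.descFactorial_eq_factorial_mul_choose]
  push_cast; ring

theorem poch_add_eq_sum (u v : ℝ) (m : ℕ) :
    poch (u + v) m = ∑ l ∈ range (m + 1), (m.choose l : ℝ) * poch u l * poch v (m - l) := by
  -- Mathlib's convolution is stated for falling factorials.
  have hpoch (a : ℝ) (k : ℕ) : poch a k = (-1) ^ k * (descPochhammer ℤ k).smeval (-a) := by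
    rw [descPochhammer_smeval_eq_ascPochhammer, ascPochhammer_smeval_eq_eval,
      ← poch_eq_eval_ascPochhammer, poch_neg_sub_add_one, ← mul_assoc, ← mul_pow]
    norm_num
  rw [← Nat.sum_antidiagonal_eq_sum_range_succ (fun i j => (m.choose i : ℝ) * poch u i * poch v j),
    hpoch, neg_add, Ring.descPochhammer_smeval_add _ (Commute.all _ _), mul_sum]
  refine sum_congr rfl fun p hp => ?_
  rw [← mem_antidiagonal.mp hp, hpoch, hpoch, pow_add]
  ring

theorem sum_neg_one_pow_mul_choose_mul_poch (y z : ℝ) (m : ℕ) :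
    ∑ i ∈ range (m + 1), (-1) ^ i * (m.choose i : ℝ) * poch y i * poch (z + i) (m - i)
      = poch (z - y) m := by
  have hsign : ((-1 : ℝ) ^ m) ^ 2 = 1 := by simp [← pow_mul]
  calc _ = (-1) ^ m * ∑ i ∈ range (m + 1),
          (m.choose i : ℝ) * poch y i * poch (-z - m + 1) (m - i) := by
        rw [mul_sum]
        refine sum_congr rfl fun i hi => ?_
        have him := mem_range_succ_iff.mp hi
        have hrefl := poch_neg_sub_add_one (-z - m + 1) (m - i)
        rw [show -(-z - m + 1) - ((m - i : ℕ) : ℝ) + 1 = z + i by push_cast [him]; ring] at hrefl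
        rw [hrefl, ← Nat.sub_add_cancel him, pow_add, Nat.add_sub_cancel]
        ring
    _ = poch (z - y) m := by
        rw [← poch_add_eq_sum, show y + (-z - m + 1) = -(z - y) - m + 1 by ring,
          poch_neg_sub_add_one, ← mul_assoc, ← sq, hsign, one_mul]

theorem sum_choose_mul_choose_diag_flip {R : Type*} [CommSemiring R] (m : ℕ) (F : ℕ → ℕ → R) :
    ∑ i ∈ range (m + 1), ∑ l ∈ range (m - i + 1), (m.choose i * (m - i).choose l : R) * F i l
      = ∑ s ∈ range (m + 1), ∑ i ∈ range (s + 1), (m.choose s * s.choose i : R) * F i (s - i) :=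
  calc _ = ∑ i ∈ range (m + 1), ∑ l ∈ range (m + 1 - i),
        (m.choose (i + l) * (i + l).choose i : R) * F i l := by
        refine sum_congr rfl fun i hi => ?_
        rw [Nat.sub_add_comm (mem_range_succ_iff.mp hi)]
        refine sum_congr rfl fun l _ => ?_
        rw [← Nat.cast_mul, ← Nat.cast_mul, Nat.choose_mul (Nat.le_add_right i l),
          Nat.add_sub_cancel_left]
    _ = _ :=
        (sum_range_diag_flip _ fun i l => (m.choose (i + l) * (i + l).choose i : R) * F i l).symm
    _ = _ := sum_congr rfl fun s _ => sum_congr rfl fun i hi => by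
        rw [Nat.add_sub_cancel' (mem_range_succ_iff.mp hi)]

theorem poch_neg_sub_mul_poch {s m : ℕ} (h : s ≤ m) (c : ℝ) :
    poch (-c - m + 1) (m - s) * poch c s = (-1) ^ m * (-1) ^ s * poch c m := by
  have hrefl := poch_neg_sub_add_one (c + s) (m - s)
  rw [show -(c + s) - ((m - s : ℕ) : ℝ) + 1 = -c - m + 1 by push_cast [h]; ring] at hrefl
  have hsign : (-1 : ℝ) ^ m = (-1) ^ s * (-1) ^ (m - s) := by rw [← pow_add, Nat.add_sub_cancel' h]
  have hsq : (-1 : ℝ) ^ s * (-1) ^ s = 1 := by simp [← mul_pow]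
  rw [hrefl, poch_eq_mul_poch h c, hsign]
  linear_combination -(-1 : ℝ) ^ (m - s) * poch c s * poch (c + s) (m - s) * hsq

noncomputable def F32Numerator (n : ℕ) (a b d e : ℝ) : ℝ :=
  ∑ j ∈ range (n + 1),
    (-1) ^ j * (n.choose j : ℝ) * poch a j * poch b j * poch (d + j) (n - j) * poch (e + j) (n - j)

theorem F32Numerator_saalschutz (m : ℕ) (x y z : ℝ) :
    F32Numerator m x y z (x + y - z - m + 1) = (-1) ^ m * poch (z - x) m * poch (z - y) m :=
  calc F32Numerator m x y z (x + y - z - m + 1)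
      = ∑ i ∈ range (m + 1), ∑ l ∈ range (m - i + 1), (m.choose i * (m - i).choose l : ℝ) *
          ((-1) ^ i * poch x i * poch y i * poch (z + i) (m - i) * poch (x + i) l *
            poch (y - z - m + 1) (m - i - l)) := by
        refine sum_congr rfl fun i _ => ?_
        rw [show x + y - z - m + 1 + i = (x + i) + (y - z - m + 1) by ring,
          poch_add_eq_sum (x + i) (y - z - m + 1) (m - i), mul_sum]
        exact sum_congr rfl fun l _ => by ring
    _ = ∑ s ∈ range (m + 1), ∑ i ∈ range (s + 1), (m.choose s * s.choose i : ℝ) *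
          ((-1) ^ i * poch x i * poch y i * poch (z + i) (m - i) * poch (x + i) (s - i) *
            poch (y - z - m + 1) (m - i - (s - i))) :=
        sum_choose_mul_choose_diag_flip m _
    _ = ∑ s ∈ range (m + 1), (m.choose s : ℝ) * poch x s * poch (z + s) (m - s) *
          (poch (-(z - y) - m + 1) (m - s) * poch (z - y) s) := by
        refine sum_congr rfl fun s hs => ?_
        have hsm := mem_range_succ_iff.mp hs
        rw [← sum_neg_one_pow_mul_choose_mul_poch, mul_sum, mul_sum]
        refine sum_congr rfl fun i hi => ?_
        have his := mem_range_succ_iff.mp hi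
        have hz := poch_eq_mul_poch (Nat.sub_le_sub_right hsm i) (z + i)
        rw [show z + i + ((s - i : ℕ) : ℝ) = z + s by push_cast [his]; ring,
          show m - i - (s - i) = m - s by omega] at hz
        rw [poch_eq_mul_poch his x, hz, show m - i - (s - i) = m - s by omega,
          show -(z - y) - m + 1 = y - z - m + 1 by ring]
        ring
    _ = (-1) ^ m * poch (z - y) m * ∑ s ∈ range (m + 1),
          (-1) ^ s * (m.choose s : ℝ) * poch x s * poch (z + s) (m - s) := by
        rw [mul_sum]
        refine sum_congr rfl fun s hs => ?_
        rw [poch_neg_sub_mul_poch (mem_range_succ_iff.mp hs)]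
        ring
    _ = (-1) ^ m * poch (z - x) m * poch (z - y) m := by
        rw [sum_neg_one_pow_mul_choose_mul_poch]
        ring

theorem F32Numerator_transformation (n : ℕ) (a b d e : ℝ) :
    F32Numerator n a b d e
      = F32Numerator n a (a + b - n - d - e + 1) (a - n - d + 1) (a - n - e + 1) := by
  set c := a + b - n - d - e + 1
  set v := n + d + e - a - 1
  let G : ℕ → ℕ → ℝ := fun k l => (-1) ^ (k + l) * poch a (k + l) * poch c k * poch v l *
    poch (d + (k + l : ℕ)) (n - (k + l)) * poch (e + (k + l : ℕ)) (n - (k + l))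
  calc F32Numerator n a b d e
      = ∑ j ∈ range (n + 1), ∑ k ∈ range (j + 1), (n.choose j * j.choose k : ℝ) * G k (j - k) := by
        refine sum_congr rfl fun j _ => ?_
        rw [show b = c + v by ring, poch_add_eq_sum c v j, mul_sum, sum_mul, sum_mul]
        refine sum_congr rfl fun k hk => ?_
        simp only [G, Nat.add_sub_cancel' (mem_range_succ_iff.mp hk)]
        ring
    _ = ∑ k ∈ range (n + 1), ∑ l ∈ range (n - k + 1), (n.choose k * (n - k).choose l : ℝ) * G k l :=
        (sum_choose_mul_choose_diag_flip n G).symm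
    _ = ∑ k ∈ range (n + 1), (-1) ^ k * (n.choose k : ℝ) * poch a k * poch c k *
          F32Numerator (n - k) (a + k) v (d + k) (e + k) := by
        refine sum_congr rfl fun k _ => ?_
        rw [F32Numerator, mul_sum]
        refine sum_congr rfl fun l _ => ?_
        simp only [G, poch_add a k l, pow_add, Nat.cast_add, ← add_assoc, Nat.sub_sub]
        ring
    _ = F32Numerator n a c (a - n - d + 1) (a - n - e + 1) := by
        refine sum_congr rfl fun k hk => ?_
        have hkn := mem_range_succ_iff.mp hk
        have hsaal := F32Numerator_saalschutz (n - k) (a + k) v (d + k)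
        rw [show a + k + v - (d + k) - ((n - k : ℕ) : ℝ) + 1 = e + k by push_cast [hkn]; ring,
          show d + k - (a + k) = d - a by ring,
          show d + k - v = a - n - e + 1 + k by ring] at hsaal
        have hrefl := poch_neg_sub_add_one (d - a) (n - k)
        rw [show -(d - a) - ((n - k : ℕ) : ℝ) + 1 = a - n - d + 1 + k by push_cast [hkn]; ring]
          at hrefl
        rw [hsaal, hrefl]
        ring

theorem F32_eq_F32Numerator_div {n : ℕ} {d e : ℝ} (hd : poch d n ≠ 0) (he : poch e n ≠ 0)
    (a b : ℝ) : F32 n a b d e = F32Numerator n a b d e / (poch d n * poch e n) := by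
  rw [F32, F32Numerator, sum_div]
  refine sum_congr rfl fun j hj => ?_
  have hjn := mem_range_succ_iff.mp hj
  rw [poch_eq_mul_poch hjn d] at hd ⊢
  rw [poch_eq_mul_poch hjn e] at he ⊢
  obtain ⟨hd₁, hd₂⟩ := mul_ne_zero_iff.mp hd
  obtain ⟨he₁, he₂⟩ := mul_ne_zero_iff.mp he
  rw [poch_neg_natCast]
  field_simp

/-- The `₃F₂` transformation identity for terminating series at unit argument. -/
theorem F32_transformation (n : ℕ) (a b d e : ℝ)
    (h : ∀ j ≤ n, poch d j ≠ 0 ∧ poch e j ≠ 0 ∧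
      poch (a - n - d + 1) j ≠ 0 ∧ poch (a - n - e + 1) j ≠ 0) :
    F32 n a b d e
      = poch (d - a) n * poch (e - a) n / (poch d n * poch e n) *
          F32 n a (a + b - n - d - e + 1) (a - n - d + 1) (a - n - e + 1) := by
  obtain ⟨hd, he, hD, hE⟩ := h n le_rfl
  have hsq : ((-1 : ℝ) ^ n) ^ 2 = 1 := by simp [← pow_mul]
  have hDE : poch (a - n - d + 1) n * poch (a - n - e + 1) n = poch (d - a) n * poch (e - a) n := by
    rw [show a - n - d + 1 = -(d - a) - n + 1 by ring,
      show a - n - e + 1 = -(e - a) - n + 1 by ring,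
      poch_neg_sub_add_one, poch_neg_sub_add_one]
    linear_combination poch (d - a) n * poch (e - a) n * hsq
  obtain ⟨hda, hea⟩ := mul_ne_zero_iff.mp (hDE ▸ mul_ne_zero hD hE)
  rw [F32_eq_F32Numerator_div hd he, F32_eq_F32Numerator_div hD hE, hDE,
    F32Numerator_transformation]
  field_simp
end

section
/- Convolution recursion for the transition functions: define φ_{0,1}(n,y) = ψ(n,y) where ψ(n,z) = ∑_{j=0}^{n} C(n,j) (n−2a−b−c+1)_j / ((−a−c+1)_j (−a)_j ((z+1)/2 − j)! (a − (z+1)/2)!) for odd z and ψ(n,z)=0 for even z, and φ_{0,r+1}(n,y) = φ_{0,r}(n,y+1) + φ_{0,r}(n,y−1). Then for all r ≥ 1, φ_{0,r}(n,y) = (a+1)_{r−1} ∑_{j=0}^{n} C(n,j) (n−2a−b−c+1)_j / ((−a−c+1)_j (−a−r+1)_j) · 1/(((y+r)/2 − j)! (a−1−(y−r)/2)!), with 1/m! = 0 for m < 0. -/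
open Finset

/-- `1/k!` for an integer `k`, with the convention `1/k! = 0` for `k < 0`. -/
noncomputable def invfact (k : ℤ) : ℝ :=
  if 0 ≤ k then ((Nat.factorial k.toNat : ℕ) : ℝ)⁻¹ else 0

/-- The function `ψ(n,z)` of (3.18): nonzero only for odd `z`. -/
noncomputable def psiFun (a b c n : ℕ) (z : ℤ) : ℝ :=
  if Odd z then
    ∑ j ∈ Finset.range (n + 1),
      (n.choose j : ℝ) * poch ((n : ℝ) - 2 * a - b - c + 1) j /
          (poch (-(a : ℝ) - c + 1) j * poch (-(a : ℝ)) j) *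
        invfact ((z + 1) / 2 - j) * invfact ((a : ℤ) - (z + 1) / 2)
  else 0

/-- `phi0 a b c n k = φ_{0,k+1}(n,·)`, defined by `φ_{0,1} = ψ` and the
recursion `φ_{0,r+1}(n,y) = φ_{0,r}(n,y+1) + φ_{0,r}(n,y-1)`. -/
noncomputable def phi0 (a b c n : ℕ) : ℕ → ℤ → ℝ
  | 0 => psiFun a b c n
  | k + 1 => fun y => phi0 a b c n k (y + 1) + phi0 a b c n k (y - 1)

/-! The closed form is a sum over `j` of weights times `1/((t-j)! (a+k-t)!)`, where
`t = (y+r)/2`. Pascal's rule `1/(m!(M-1)!) + 1/((m-1)!M!) = (m+M)/(m!M!)` turns the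
recursion for `φ_{0,r}` into the factor `a+k+1-j` on the `j`-th term, and the Pochhammer
identity `(x+j)(x)_j = x(x+1)_j` at `x = -(a+k+1)` absorbs that factor into
`(a+1)_{k+1} / (-a-k-1)_j`. -/

theorem invfact_sub_one (m : ℤ) : invfact (m - 1) = m * invfact m := by
  rcases le_or_gt m 0 with hm | hm
  · rw [invfact, if_neg (by omega)]
    rcases hm.lt_or_eq with hm | rfl
    · rw [invfact, if_neg (by omega), mul_zero]
    · rw [Int.cast_zero, zero_mul]
  · obtain ⟨t, rfl⟩ : ∃ t : ℕ, m = t + 1 := ⟨(m - 1).toNat, by omega⟩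
    rw [invfact, invfact, if_pos (by omega), if_pos (by omega), add_sub_cancel_right,
      Int.toNat_natCast, show ((t : ℤ) + 1).toNat = t + 1 by omega, Nat.factorial_succ]
    have : (t.factorial : ℝ) ≠ 0 := by positivity
    push_cast
    field_simp

theorem invfact_pascal (m M : ℤ) :
    invfact m * invfact (M - 1) + invfact (m - 1) * invfact M
      = (m + M) * (invfact m * invfact M) := by
  rw [invfact_sub_one, invfact_sub_one]
  ring

theorem poch_succ (x : ℝ) (j : ℕ) : poch x (j + 1) = poch x j * (x + j) :=
  prod_range_succ _ _

theorem poch_succ_eq_mul_poch_add_one (x : ℝ) (j : ℕ) :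
    poch x (j + 1) = x * poch (x + 1) j := by
  rw [poch, poch, prod_range_succ']
  push_cast
  simp only [add_zero, add_assoc, add_comm (1 : ℝ)]
  ring

theorem add_mul_poch (x : ℝ) (j : ℕ) : (x + j) * poch x j = x * poch (x + 1) j := by
  rw [← poch_succ_eq_mul_poch_add_one, poch_succ, mul_comm]

theorem poch_neg_natCast_ne_zero {m j : ℕ} (h : j ≤ m) : poch (-(m : ℝ)) j ≠ 0 := by
  refine prod_ne_zero_iff.mpr fun i hi hzero => ?_
  have : (i : ℝ) = m := by linarith
  have : i < j := mem_range.mp hi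
  norm_cast at *
  omega

theorem add_one_sub_div_poch_neg_natCast {m j : ℕ} (h : j ≤ m) :
    ((m : ℝ) + 1 - j) / poch (-(m : ℝ)) j
      = ((m : ℝ) + 1) / poch (-((m + 1 : ℕ) : ℝ)) j := by
  have hshift := add_mul_poch (-((m + 1 : ℕ) : ℝ)) j
  have h0 := poch_neg_natCast_ne_zero h
  have h1 := poch_neg_natCast_ne_zero (h.trans m.le_succ)
  push_cast at hshift h1 ⊢
  rw [show -((m : ℝ) + 1) + 1 = -m by ring] at hshift
  rw [div_eq_div_iff h0 h1]
  linear_combination -hshift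

section Formula

variable (a n : ℕ) (w : ℕ → ℝ)

/-- The closed form of `φ_{0,k+1}(n, y)` at `y = 2t-k-1`, with generic weights `w j`. -/
noncomputable def phi0Formula (k : ℕ) (t : ℤ) : ℝ :=
  poch ((a : ℝ) + 1) k *
    ∑ j ∈ range (n + 1),
      w j / poch (-(a : ℝ) - k) j * invfact (t - j) * invfact ((a : ℤ) + k - t)

variable {a n}

theorem phi0Formula_succ (hn : n ≤ a) (k : ℕ) (t : ℤ) :
    phi0Formula a n w (k + 1) t = phi0Formula a n w k t + phi0Formula a n w k (t - 1) := by
  rw [phi0Formula, phi0Formula, phi0Formula, ← mul_add, ← sum_add_distrib, poch_succ, mul_assoc,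
    mul_sum]
  congr 1
  refine sum_congr rfl fun j hjn => ?_
  have hj : j ≤ a + k := (Nat.lt_succ_iff.mp (mem_range.mp hjn)).trans (by omega)
  have hpascal :
      invfact (t - j) * invfact (a + k - t) + invfact (t - 1 - j) * invfact (a + (k + 1) - t)
        = ((a : ℝ) + k + 1 - j) * (invfact (t - j) * invfact (a + (k + 1) - t)) := by
    convert invfact_pascal (t - j) (a + (k + 1) - t) using 3 <;> push_cast <;> ring_nf
  have hratio := add_one_sub_div_poch_neg_natCast hj
  push_cast at hratio ⊢
  rw [show (a : ℤ) + k - (t - 1) = a + (k + 1) - t by ring,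
    show -(a : ℝ) - k = -(a + k) by ring, show -(a : ℝ) - (k + 1) = -(a + k + 1) by ring]
  linear_combination -(w j / poch (-(a + k : ℝ)) j) * hpascal -
    (w j * (invfact (t - j) * invfact ((a : ℤ) + (k + 1) - t))) * hratio

end Formula

theorem phi0_eq_phi0Formula (a b c n : ℕ) (hn : n ≤ a) (k : ℕ) (t : ℤ) :
    phi0 a b c n k (2 * t - k - 1) = phi0Formula a n
      (fun j ↦ (n.choose j : ℝ) * poch ((n : ℝ) - 2 * a - b - c + 1) j /
        poch (-(a : ℝ) - c + 1) j) k t := by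
  induction k generalizing t with
  | zero =>
    have hodd : Odd (2 * t - (0 : ℕ) - 1) := ⟨t - 1, by omega⟩
    simp only [phi0, psiFun, if_pos hodd, phi0Formula, poch, prod_range_zero, one_mul]
    refine sum_congr rfl fun j _ => ?_
    rw [show (2 * t - (0 : ℕ) - 1 + 1) / 2 = t by omega, div_div]
    push_cast
    ring_nf
  | succ k ih =>
    rw [phi0Formula_succ _ hn, ← ih, ← ih]
    simp only [phi0]
    congr 2 <;> push_cast <;> ring

theorem phi0_closed_form_general (a b c n : ℕ)
    (hn : n ≤ a - 1) (k : ℕ) (y : ℤ) (hy : Even (y + (k + 1 : ℕ))) :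
    phi0 a b c n k y
      = poch ((a : ℝ) + 1) k *
        ∑ j ∈ Finset.range (n + 1),
          (n.choose j : ℝ) * poch ((n : ℝ) - 2 * a - b - c + 1) j /
              (poch (-(a : ℝ) - c + 1) j * poch (-(a : ℝ) - (k + 1) + 1) j) *
            invfact ((y + (k + 1 : ℕ)) / 2 - j) *
            invfact ((a : ℤ) - 1 - (y - (k + 1 : ℕ)) / 2) := by
  obtain ⟨t, ht⟩ := hy
  obtain rfl : y = 2 * t - k - 1 := by push_cast at ht; omega
  rw [phi0_eq_phi0Formula a b c n (by omega), phi0Formula]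
  congr 1
  refine sum_congr rfl fun j _ => ?_
  rw [show (2 * t - k - 1 + (k + 1 : ℕ)) / 2 = t by push_cast; omega,
    show (a : ℤ) - 1 - (2 * t - k - 1 - (k + 1 : ℕ)) / 2 = a + k - t by push_cast; omega,
    div_div]
  ring_nf

/-- Closed formula (3.20) for the convolved transition functions `φ_{0,r}`,
here with `r = k+1 ≥ 1`, valid for `y + r` even. -/
theorem phi0_closed_form (a b c n : ℕ) (ha : 0 < a) (hb : 0 < b) (hc : 0 < c)
    (hn : n ≤ a - 1) (k : ℕ) (y : ℤ) (hy : Even (y + (k + 1 : ℕ))) :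
    phi0 a b c n k y
      = poch ((a : ℝ) + 1) k *
        ∑ j ∈ Finset.range (n + 1),
          (n.choose j : ℝ) * poch ((n : ℝ) - 2 * a - b - c + 1) j /
              (poch (-(a : ℝ) - c + 1) j * poch (-(a : ℝ) - (k + 1) + 1) j) *
            invfact ((y + (k + 1 : ℕ)) / 2 - j) *
            invfact ((a : ℤ) - 1 - (y - (k + 1 : ℕ)) / 2) :=
  phi0_closed_form_general a b c n hn k y hy
end
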